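/- arXiv:2307.14868 — 4 statements merged into one kernel-verified Lean document; each statement's English description precedes it below -/
import Mathlib

section
/- Consider N interconnected scalar systems ẋ_i = f_i(x_i) + u_i, i = 1,…,N, with f_i : ℝ → ℝ continuous, where each system defines a semi-passive map u_i ↦ x_i. Let the coupling inputs be u_i = −Σ_{j≠i} a_{ij}(x_i − x_j) with constant gains a_{ij} ≥ 0, and suppose the directed graph on the N nodes with an edge from node j to node i whenever a_{ij} > 0 contains a directed spanning tree. Then every solution t ↦ x(t) = (x_1(t),…,x_N(t)) of the closed-loop system defined on [0,∞) is bounded. -/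
open Finset

/-- The scalar system `ẋ = f(x) + u` defines a semi-passive map `u ↦ x`:
there exist a `C¹`, radially unbounded, nonnegative storage function `V`,
a continuous function `H`, a positive continuous function `ψ` (on `[0,∞)`),
and a constant `ρ > 0` such that `V'(x)(f(x)+u) ≤ u·x − H(x)` for all `x, u`,
and `H(x) ≥ ψ(|x|)` whenever `|x| ≥ ρ`. -/
def SemiPassive (f : ℝ → ℝ) : Prop :=
  ∃ (V H ψ : ℝ → ℝ) (ρ : ℝ),
    ContDiff ℝ 1 V ∧
    (∀ x, 0 ≤ V x) ∧
    Filter.Tendsto V (Filter.comap (fun x : ℝ => |x|) Filter.atTop) Filter.atTop ∧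
    Continuous H ∧
    ContinuousOn ψ (Set.Ici 0) ∧
    (∀ r : ℝ, 0 ≤ r → 0 < ψ r) ∧
    0 < ρ ∧
    (∀ x u : ℝ, deriv V x * (f x + u) ≤ u * x - H x) ∧
    (∀ x : ℝ, ρ ≤ |x| → ψ |x| ≤ H x)

/-- In the weighted directed graph with weights `a` (an edge from node `j` to
node `i` whenever `a i j > 0`), node `j` is reachable from node `i`. -/
def Reachable {N : ℕ} (a : Fin N → Fin N → ℝ) : Fin N → Fin N → Prop :=
  Relation.ReflTransGen (fun u v => 0 < a v u)

/-!
Semi-passivity of `ẋ = f(x) + u` with respect to the supply rate `u·x` holds for every `u`, which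
forces `V' = id`; taking `u = 0` then gives `x f(x) ≤ -H(x) < 0` for `|x| ≥ ρ`. So each uncoupled
vector field points strictly inward at `±c` once `c` is large. On the boundary of the cube
`[-c, c]ᴺ` the diffusive coupling never points outward: a node at `c` only sees neighbours at or
below it, and one at `-c` only neighbours at or above it. Hence every large enough cube containing `x(0)` is forward invariant.
-/

open Set Filter Topology

lemma eq_zero_of_forall_mul_le {p C : ℝ} (h : ∀ u, p * u ≤ C) : p = 0 := by
  by_contra hp
  have := h ((C + 1) / p)
  rw [mul_div_cancel₀ _ hp] at this
  linarith

theorem SemiPassive.eventually_inward {f : ℝ → ℝ} (hsp : SemiPassive f) :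
    ∀ᶠ c in atTop, f c < 0 ∧ 0 < f (-c) := by
  obtain ⟨V, H, ψ, ρ, -, -, -, -, -, hψ, hρ, hV, hH⟩ := hsp
  have hV' : ∀ y, deriv V y = y := fun y => sub_eq_zero.mp <|
    eq_zero_of_forall_mul_le (C := -H y - deriv V y * f y) fun u => by linarith [hV y u]
  have hsign : ∀ y, ρ ≤ |y| → y * f y < 0 := fun y hy => by
    linarith [hV' y ▸ hV y 0, hψ |y| (abs_nonneg y), hH y hy]
  filter_upwards [eventually_ge_atTop ρ] with c hc
  have hc₀ : 0 < c := hρ.trans_le hc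
  constructor
  · exact neg_of_mul_neg_right (hsign c (hc.trans (le_abs_self c))) hc₀.le
  · refine pos_of_mul_neg_right (hsign (-c) ?_) (neg_nonpos.mpr hc₀.le)
    rwa [abs_neg, abs_of_pos hc₀]

lemma HasDerivWithinAt.eventually_lt_of_neg {g : ℝ → ℝ} {g' t : ℝ}
    (hg : HasDerivWithinAt g g' (Ici t) t) (hg' : g' < 0) : ∀ᶠ s in 𝓝[>] t, g s < g t := by
  filter_upwards [hg.Ioi_of_Ici.limsup_slope_le' (lt_irrefl t) hg', self_mem_nhdsWithin]
    with s hslope hts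
  exact (slope_neg_iff_of_le (le_of_lt hts)).mp hslope

lemma HasDerivWithinAt.eventually_le_of_eq_imp_neg {g : ℝ → ℝ} {g' t c : ℝ}
    (hg : HasDerivWithinAt g g' (Ici t) t) (ht : g t ≤ c) (hup : g t = c → g' < 0) :
    ∀ᶠ s in 𝓝[>] t, g s ≤ c := by
  rcases ht.lt_or_eq with hlt | heq
  · exact ((hg.continuousWithinAt.mono Ioi_subset_Ici_self).eventually_lt_const hlt).mono
      fun _ => le_of_lt
  · exact (hg.eventually_lt_of_neg (hup heq)).mono fun _ hs => heq ▸ hs.le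

lemma HasDerivWithinAt.eventually_abs_le {g : ℝ → ℝ} {g' t c : ℝ}
    (hg : HasDerivWithinAt g g' (Ici t) t) (ht : |g t| ≤ c) (hup : g t = c → g' < 0)
    (hdown : g t = -c → 0 < g') : ∀ᶠ s in 𝓝[>] t, |g s| ≤ c := by
  obtain ⟨hlo, hhi⟩ := abs_le.mp ht
  have hle := hg.eventually_le_of_eq_imp_neg hhi hup
  have hge := hg.neg.eventually_le_of_eq_imp_neg (g := fun s => -g s) (neg_le.mpr hlo)
    fun h => neg_neg_iff_pos.mpr (hdown (neg_eq_iff_eq_neg.mp h))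
  filter_upwards [hle, hge] with s hs hs'
  exact abs_le.mpr ⟨neg_le.mp hs', hs⟩

theorem forall_abs_le_of_inward {ι : Type*} [Finite ι] {x v : ℝ → ι → ℝ} {c : ℝ}
    (hx : ∀ i, ∀ t ∈ Ici (0 : ℝ), HasDerivWithinAt (fun s => x s i) (v t i) (Ici 0) t)
    (h0 : ∀ i, |x 0 i| ≤ c)
    (hin : ∀ t ∈ Ici (0 : ℝ), (∀ j, |x t j| ≤ c) →
      ∀ i, (x t i = c → v t i < 0) ∧ (x t i = -c → 0 < v t i)) :
    ∀ t ∈ Ici (0 : ℝ), ∀ i, |x t i| ≤ c := by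
  intro T hT
  set box : Set ℝ := {t | ∀ i, |x t i| ≤ c}
  have hclosed : IsClosed (box ∩ Icc 0 T) := by
    have hcont : ContinuousOn x (Icc 0 T) := continuousOn_pi.mpr fun i t ht =>
      (hx i t ht.1).continuousWithinAt.mono Icc_subset_Ici_self
    have := hcont.preimage_isClosed_of_isClosed isClosed_Icc
      (isClosed_set_pi (i := univ) fun _ _ => isClosed_Icc (a := -c) (b := c))
    convert this using 1
    rw [inter_comm]
    ext t
    simp only [box, Set.mem_inter_iff, Set.mem_preimage, Set.mem_univ_pi, Set.mem_Icc, abs_le]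
    rfl
  refine hclosed.Icc_subset_of_forall_mem_nhdsWithin h0 (fun t ⟨ht, htT⟩ => ?_) ⟨hT, le_rfl⟩
  refine eventually_all.mpr fun i => ?_
  exact ((hx i t htT.1).mono (Ici_subset_Ici.mpr htT.1)).eventually_abs_le (ht i)
    (hin t htT.1 ht i).1 (hin t htT.1 ht i).2

theorem network_bounded_of_semipassive_of_spanning_tree_general
    (N : ℕ)
    (f : Fin N → ℝ → ℝ)
    (hsp : ∀ i, SemiPassive (f i))
    (a : Fin N → Fin N → ℝ)
    (ha : ∀ i j, 0 ≤ a i j)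
    (x : ℝ → Fin N → ℝ)
    (hx : ∀ i : Fin N, ∀ t ∈ Set.Ici (0 : ℝ),
      HasDerivWithinAt (fun s => x s i)
        (f i (x t i) - ∑ j ∈ Finset.univ.erase i, a i j * (x t i - x t j))
        (Set.Ici 0) t) :
    ∃ c : ℝ, ∀ t ∈ Set.Ici (0 : ℝ), ∀ i : Fin N, |x t i| ≤ c := by
  obtain ⟨c, hf_inward, hx₀⟩ := ((eventually_all.mpr fun i => (hsp i).eventually_inward).and
    (eventually_all.mpr fun i => eventually_ge_atTop |x 0 i|)).exists
  refine ⟨c, forall_abs_le_of_inward hx hx₀ fun t _ hbox i => ⟨fun hi => ?_, fun hi => ?_⟩⟩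
  · have hcoupling : 0 ≤ ∑ j ∈ univ.erase i, a i j * (x t i - x t j) :=
      sum_nonneg fun j _ => mul_nonneg (ha i j) (by linarith [(abs_le.mp (hbox j)).2])
    linarith [hi ▸ (hf_inward i).1]
  · have hcoupling : ∑ j ∈ univ.erase i, a i j * (x t i - x t j) ≤ 0 :=
      sum_nonpos fun j _ => mul_nonpos_of_nonneg_of_nonpos (ha i j)
        (by linarith [(abs_le.mp (hbox j)).1])
    linarith [hi ▸ (hf_inward i).2]

/-- Boundedness of solutions for a network of heterogeneous semi-passive
scalar systems `ẋᵢ = fᵢ(xᵢ) + uᵢ` with diffusive coupling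
`uᵢ = −∑_{j≠i} aᵢⱼ (xᵢ − xⱼ)`, whose interconnection graph contains a
directed spanning tree. -/
theorem network_bounded_of_semipassive_of_spanning_tree
    (N : ℕ) (hN : 0 < N)
    (f : Fin N → ℝ → ℝ)
    (hf : ∀ i, Continuous (f i))
    (hsp : ∀ i, SemiPassive (f i))
    (a : Fin N → Fin N → ℝ)
    (ha : ∀ i j, 0 ≤ a i j)
    (htree : ∃ r : Fin N, ∀ j : Fin N, Reachable a r j)
    (x : ℝ → Fin N → ℝ)
    (hx : ∀ i : Fin N, ∀ t ∈ Set.Ici (0 : ℝ),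
      HasDerivWithinAt (fun s => x s i)
        (f i (x t i) - ∑ j ∈ Finset.univ.erase i, a i j * (x t i - x t j))
        (Set.Ici 0) t) :
    ∃ c : ℝ, ∀ t ∈ Set.Ici (0 : ℝ), ∀ i : Fin N, |x t i| ≤ c :=
  network_bounded_of_semipassive_of_spanning_tree_general N f hsp a ha x hx
end

section
/- Let L ∈ ℝ^{N×N} be the Laplacian matrix of a weighted directed graph G that contains a directed spanning tree but is not strongly connected. Then there exist a permutation matrix T ∈ ℝ^{N×N}, an integer m ∈ {2,3,…,N}, and a partition of {1,…,N} into consecutive blocks of sizes n_1,…,n_m, such that T^⊤ L T is lower block triangular with blocks A_{ij} ∈ ℝ^{n_i×n_j} (i.e., the (i,j) block of T^⊤ L T equals A_{ii} for i = j, equals −A_{ij} for j < i, and equals 0 for j > i), where: for each i, A_{ii} = L_{ii} + D_i with L_{ii} ∈ ℝ^{n_i×n_i} the Laplacian matrix of a strongly connected weighted directed graph on n_i nodes and D_i a diagonal matrix with nonnegative entries; D_1 = 0; each A_{ij} (j < i) has nonnegative entries; and D_i 𝟏_{n_i} = Σ_{j=1}^{i−1} A_{ij} 𝟏_{n_j},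 where 𝟏_n denotes the all-ones vector in ℝ^n. -/
open Finset

/-- The Laplacian matrix of the weighted directed graph with weights `a`:
`[L]ᵢⱼ = −aᵢⱼ` for `i ≠ j` and `[L]ᵢᵢ = ∑_{ℓ≠i} aᵢℓ`. -/
def lap {N : ℕ} (a : Fin N → Fin N → ℝ) : Matrix (Fin N) (Fin N) ℝ :=
  Matrix.of fun i j =>
    if i = j then ∑ ℓ ∈ Finset.univ.erase i, a i ℓ else -(a i j)

/-! The blocks are the strongly connected components of the graph, listed in a topological order
of its condensation: reachability is a preorder whose antisymmetrization is a partial order on the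
components, a linear extension of it numbers them `0, …, m - 1`, and sorting the nodes by that
number gives `σ`. An edge of the graph only leads from a component to itself or to a later one, so
the permuted Laplacian is lower block triangular; `m ≥ 2` because the graph is not strongly
connected, and `Dᵢ 𝟏 = ∑_{j<i} Aᵢⱼ 𝟏` is the vanishing of the row sums of `L`. -/

open Relation

namespace Relation

variable {α : Type*}

theorem exists_surjective_fin_reflTransGen [Finite α] (r : α → α → Prop) :
    ∃ (m : ℕ) (f : α → Fin m), Function.Surjective f ∧
      (∀ x y, ReflTransGen r x y → f x ≤ f y) ∧
      ∀ x y, f x = f y → ReflTransGen r x y := by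
  let _ : Preorder α :=
    { le := ReflTransGen r, le_refl := fun _ => .refl, le_trans := fun _ _ _ => .trans }
  let Q := LinearExtension (Antisymmetrization α (· ≤ ·))
  have : Fintype Q := @Fintype.ofFinite _ (inferInstanceAs (Finite (Quotient _)))
  let e : Q ≃o Fin (Fintype.card Q) := (Fintype.orderIsoFinOfCardEq Q rfl).symm
  let f : α → Fin (Fintype.card Q) := fun x => e (toLinearExtension (toAntisymmetrization _ x))
  refine ⟨_, f, ?_, fun x y h => ?_, fun x y h => ?_⟩
  · exact e.surjective.comp Quotient.mk_surjective
  · exact e.monotone (toLinearExtension.monotone (toAntisymmetrization_mono h))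
  · have hxy : toAntisymmetrization (α := α) (· ≤ ·) x = toAntisymmetrization _ y :=
      e.injective h
    exact toAntisymmetrization_le_toAntisymmetrization_iff.1 hxy.le

theorem ReflTransGen.restrict_fiber {β : Type*} [PartialOrder β] {r : α → α → Prop}
    {f : α → β} (hf : ∀ x y, ReflTransGen r x y → f x ≤ f y) {x y : α}
    (h : ReflTransGen r x y) (hyx : f y ≤ f x) :
    ReflTransGen (fun u v => f u = f x ∧ f v = f x ∧ r u v) x y := by
  induction h with
  | refl => exact .refl
  | @tail c y hxc hcy ih =>
    have hfc : f c = f x := le_antisymm ((hf _ _ (.single hcy)).trans hyx) (hf _ _ hxc)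
    have hfy : f y = f x := le_antisymm hyx (hfc ▸ hf _ _ (.single hcy))
    exact (ih hfc.le).tail ⟨hfc, hfy, hcy⟩

theorem exists_perm_blocks_of_reflTransGen {N : ℕ} (r : Fin N → Fin N → Prop) :
    ∃ (m : ℕ) (σ : Equiv.Perm (Fin N)) (b : Fin N → Fin m),
      Monotone b ∧ Function.Surjective b ∧
      (∀ k l, ReflTransGen r (σ k) (σ l) → b k ≤ b l) ∧
      (∀ k l, b k = b l → ReflTransGen r (σ k) (σ l)) ∧
      ∀ k l, b k = b l →
        ReflTransGen (fun u v => b u = b k ∧ b v = b k ∧ r (σ u) (σ v)) k l := by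
  obtain ⟨m, f, hsurj, hmono, hlevel⟩ := exists_surjective_fin_reflTransGen r
  let σ := Tuple.sort f
  have hb : ∀ k l, ReflTransGen (fun u v => r (σ u) (σ v)) k l → f (σ k) ≤ f (σ l) :=
    fun k l h => hmono _ _ (h.lift σ fun _ _ => id)
  refine ⟨m, σ, f ∘ σ, Tuple.monotone_sort f, hsurj.comp σ.surjective,
    fun k l => hmono _ _, fun k l => hlevel _ _, fun k l hkl => ?_⟩
  have hkl' : ReflTransGen (fun u v => r (σ u) (σ v)) k l := by
    simpa [Function.onFun] using
      (hlevel _ _ hkl).lift (p := fun u v => r (σ u) (σ v)) σ.symm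
        fun u v h => by simpa [Function.onFun] using h
  exact hkl'.restrict_fiber hb hkl.ge

end Relation

theorem Finset.sum_filter_eq_add_sum_filter_lt {ι β M : Type*} [Fintype ι] [LinearOrder β]
    [AddCommMonoid M] (b : ι → β) (g : ι → M) (x : β) (hg : ∀ l, x < b l → g l = 0) :
    ∑ l ∈ univ.filter (b · = x), g l + ∑ l ∈ univ.filter (b · < x), g l = ∑ l, g l := by
  rw [← sum_filter_add_sum_filter_not univ (b · < x), add_comm]
  congr 1
  refine sum_subset (fun l hl => ?_) fun l hl hl' => hg l ?_
  · simp_all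
  · simp only [mem_filter, mem_univ, true_and, not_lt] at hl hl'
    exact hl.lt_of_ne' hl'

section Laplacian

variable {N : ℕ} {a : Fin N → Fin N → ℝ}

theorem lap_of_ne {i j : Fin N} (h : i ≠ j) : lap a i j = -a i j := by
  simp [lap, h]

theorem lap_nonpos_of_ne (ha : ∀ i j, i ≠ j → 0 ≤ a i j) {i j : Fin N} (h : i ≠ j) :
    lap a i j ≤ 0 := by
  simpa [lap_of_ne h] using ha i j h

theorem lap_self_nonneg (ha : ∀ i j, i ≠ j → 0 ≤ a i j) (i : Fin N) : 0 ≤ lap a i i := by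
  simp only [lap, Matrix.of_apply]
  exact sum_nonneg fun j hj => ha i j (ne_of_mem_erase hj).symm

theorem sum_lap_eq_zero (a : Fin N → Fin N → ℝ) (i : Fin N) : ∑ j, lap a i j = 0 := by
  rw [← sum_erase_add _ _ (mem_univ i),
    sum_congr rfl fun j hj => lap_of_ne (ne_of_mem_erase hj).symm]
  simp [lap]

theorem reachable_of_reflTransGen_lap_neg (ha : ∀ i j, i ≠ j → 0 ≤ a i j) {x y : Fin N}
    (h : ReflTransGen (fun u v => lap a v u < 0) x y) : Reachable a x y := by
  refine ReflTransGen.mono (fun u v huv => ?_) _ _ h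
  by_cases hvu : v = u
  · subst hvu
    exact absurd huv (lap_self_nonneg ha v).not_gt
  · simpa [lap_of_ne hvu] using huv

end Laplacian

theorem laplacian_block_triangularization_of_spanning_tree_general
    (N : ℕ)
    (a : Fin N → Fin N → ℝ)
    (ha : ∀ i j : Fin N, i ≠ j → 0 ≤ a i j)
    (hnsc : ¬ ∀ i j : Fin N, Reachable a i j) :
    ∃ (m : ℕ) (σ : Equiv.Perm (Fin N)) (b : Fin N → Fin m) (d : Fin N → ℝ),
      2 ≤ m ∧ m ≤ N ∧
      -- the blocks are consecutive and nonempty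
      Monotone b ∧ Function.Surjective b ∧
      -- the blocks above the diagonal vanish
      (∀ k l : Fin N, b k < b l → lap a (σ k) (σ l) = 0) ∧
      -- the off-diagonal blocks `Aᵢⱼ`, `j < i`, have nonnegative entries
      (∀ k l : Fin N, b l < b k → lap a (σ k) (σ l) ≤ 0) ∧
      -- within each diagonal block `Aᵢᵢ`, off-diagonal entries are `≤ 0`,
      -- i.e. `Lᵢᵢ` has nonpositive off-diagonal entries
      (∀ k l : Fin N, k ≠ l → b k = b l → lap a (σ k) (σ l) ≤ 0) ∧
      -- `Dᵢ` is diagonal with nonnegative entries `d`, and `D₁ = 0`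
      (∀ k : Fin N, 0 ≤ d k) ∧
      (∀ k : Fin N, (b k : ℕ) = 0 → d k = 0) ∧
      -- `Dᵢ 𝟏 = ∑_{j<i} Aᵢⱼ 𝟏`
      (∀ k : Fin N,
        d k = ∑ l ∈ Finset.univ.filter (fun l : Fin N => b l < b k),
          -(lap a (σ k) (σ l))) ∧
      -- `Aᵢᵢ = Lᵢᵢ + Dᵢ` with `Lᵢᵢ` having zero row sums
      (∀ k : Fin N,
        ∑ l ∈ Finset.univ.filter (fun l : Fin N => b l = b k),
          lap a (σ k) (σ l) = d k) ∧
      -- each `Lᵢᵢ` is the Laplacian of a strongly connected graph on block `i`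
      (∀ i : Fin m, ∀ k l : Fin N, b k = i → b l = i →
        Relation.ReflTransGen
          (fun u v => b u = i ∧ b v = i ∧ lap a (σ v) (σ u) < 0) k l) := by
  obtain ⟨m, σ, b, hb_mono, hb_surj, hb_le, hb_same, hb_block⟩ :=
    exists_perm_blocks_of_reflTransGen fun u v => lap a v u < 0
  have hoff : ∀ k l, k ≠ l → lap a (σ k) (σ l) ≤ 0 :=
    fun k l hkl => lap_nonpos_of_ne ha (σ.injective.ne hkl)
  have hupper : ∀ k l, b k < b l → lap a (σ k) (σ l) = 0 := fun k l hkl =>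
    le_antisymm (hoff k l (ne_of_apply_ne b hkl.ne))
      (not_lt.1 fun hneg => (hb_le l k (.single hneg)).not_gt hkl)
  have hlower : ∀ k l, b l < b k → k ≠ l := fun k l hlk => ne_of_apply_ne b hlk.ne'
  refine ⟨m, σ, b, fun k => ∑ l ∈ univ.filter (fun l => b l < b k), -lap a (σ k) (σ l),
    ?_, ?_, hb_mono, hb_surj, hupper, fun k l hlk => hoff k l (hlower k l hlk),
    fun k l hkl _ => hoff k l hkl,
    fun k => sum_nonneg fun l hl => neg_nonneg.2 (hoff k l (hlower k l (mem_filter.1 hl).2)),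
    fun k hk => sum_eq_zero fun l hl => by simp [Fin.lt_def, hk] at hl,
    fun k => rfl, fun k => ?_, fun i k l hk hl => ?_⟩
  · by_contra! hm
    have : Subsingleton (Fin m) := Fin.subsingleton_iff_le_one.2 (by omega)
    refine hnsc fun i j => ?_
    simpa using reachable_of_reflTransGen_lap_neg ha
      (hb_same (σ.symm i) (σ.symm j) (Subsingleton.elim _ _))
  · simpa using Fintype.card_le_of_surjective b hb_surj
  · have hsum := sum_filter_eq_add_sum_filter_lt b (fun l => lap a (σ k) (σ l)) (b k) (hupper k)
    rw [Equiv.sum_comp σ (lap a (σ k)), sum_lap_eq_zero] at hsum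
    simp only [sum_neg_distrib]
    exact eq_neg_of_add_eq_zero_left hsum
  · subst hk
    exact hb_block k l hl.symm

/-- If the graph `G` (with Laplacian `L = lap a`) contains a directed spanning
tree but is not strongly connected, then there is a permutation `σ` (i.e. a
permutation matrix `T`; the permuted matrix `M := Tᵀ L T` is given by
`M k l = L (σ k) (σ l)`) and a partition of the indices into `m` consecutive
nonempty blocks (recorded by the monotone surjective block map
`b : Fin N → Fin m`), with `2 ≤ m ≤ N`, such that `M` is lower block
triangular with blocks `Aᵢᵢ` on the diagonal and `−Aᵢⱼ` (each `Aᵢⱼ`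
entrywise nonnegative) below the diagonal, where `Aᵢᵢ = Lᵢᵢ + Dᵢ` with `Lᵢᵢ`
the Laplacian of a strongly connected graph on block `i`, `Dᵢ` diagonal with
nonnegative diagonal `d`, `D₁ = 0`, and `Dᵢ 𝟏 = ∑_{j<i} Aᵢⱼ 𝟏`. -/
theorem laplacian_block_triangularization_of_spanning_tree
    (N : ℕ)
    (a : Fin N → Fin N → ℝ)
    (ha : ∀ i j : Fin N, i ≠ j → 0 ≤ a i j)
    (htree : ∃ r : Fin N, ∀ j : Fin N, Reachable a r j)
    (hnsc : ¬ ∀ i j : Fin N, Reachable a i j) :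
    ∃ (m : ℕ) (σ : Equiv.Perm (Fin N)) (b : Fin N → Fin m) (d : Fin N → ℝ),
      2 ≤ m ∧ m ≤ N ∧
      -- the blocks are consecutive and nonempty
      Monotone b ∧ Function.Surjective b ∧
      -- the blocks above the diagonal vanish
      (∀ k l : Fin N, b k < b l → lap a (σ k) (σ l) = 0) ∧
      -- the off-diagonal blocks `Aᵢⱼ`, `j < i`, have nonnegative entries
      (∀ k l : Fin N, b l < b k → lap a (σ k) (σ l) ≤ 0) ∧
      -- within each diagonal block `Aᵢᵢ`, off-diagonal entries are `≤ 0`,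
      -- i.e. `Lᵢᵢ` has nonpositive off-diagonal entries
      (∀ k l : Fin N, k ≠ l → b k = b l → lap a (σ k) (σ l) ≤ 0) ∧
      -- `Dᵢ` is diagonal with nonnegative entries `d`, and `D₁ = 0`
      (∀ k : Fin N, 0 ≤ d k) ∧
      (∀ k : Fin N, (b k : ℕ) = 0 → d k = 0) ∧
      -- `Dᵢ 𝟏 = ∑_{j<i} Aᵢⱼ 𝟏`
      (∀ k : Fin N,
        d k = ∑ l ∈ Finset.univ.filter (fun l : Fin N => b l < b k),
          -(lap a (σ k) (σ l))) ∧
      -- `Aᵢᵢ = Lᵢᵢ + Dᵢ` with `Lᵢᵢ` having zero row sums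
      (∀ k : Fin N,
        ∑ l ∈ Finset.univ.filter (fun l : Fin N => b l = b k),
          lap a (σ k) (σ l) = d k) ∧
      -- each `Lᵢᵢ` is the Laplacian of a strongly connected graph on block `i`
      (∀ i : Fin m, ∀ k l : Fin N, b k = i → b l = i →
        Relation.ReflTransGen
          (fun u v => b u = i ∧ b v = i ∧ lap a (σ v) (σ u) < 0) k l) :=
  laplacian_block_triangularization_of_spanning_tree_general N a ha hnsc
end

section
/- Consider N scalar systems ẋ_i = f_i(x_i) + u_i with f_i : ℝ → ℝ continuous, each semi-passive, interconnected over a strongly connected weighted directed graph with associated Laplacian matrix L ∈ ℝ^{N×N}. Let p ≥ 1, let B_j ∈ ℝ^{N×M_j} for j = 1,…,p be matrices with nonnegative entries, let D = diag(d_1,…,d_N) with d_k = Σ_{j=1}^{p} Σ_{ℓ=1}^{M_j} [B_j]_{kℓ}, and let v_j : [0,∞) → ℝ^{M_j} be bounded external inputs. Then every solution t ↦ x̄(t) ∈ ℝ^N, defined on [0,∞), of the perturbed networked system ẋ̄ = F(x̄) − L x̄ − D x̄ + Σ_{j=1}^{p} B_j v_j(t), where F(x̄) = (f_1(x_1),…,f_N(x_N)),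 is bounded. -/
open Finset

/-! Semi-passivity forces `V' x = x`, so every node satisfies `x f(x) ≤ 0` outside a compact set.
Strong connectivity yields a positive left null vector `π` of the Laplacian; along
`W = ∑ πₖ xₖ²` the coupling then contributes minus the Dirichlet energy
`∑ πₖ aₖₗ (xₖ - xₗ)²` to `Ẇ`, and the damping `D` absorbs the bounded inputs. When some
coordinate is large, either all coordinates are large and every node dissipates, or the states
are spread out along a path of the graph and the Dirichlet energy dominates. Either way `Ẇ ≤ 0`,
so `W` stays bounded. -/

open Matrix

lemma SemiPassive.exists_mul_neg {f : ℝ → ℝ} (h : SemiPassive f) :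
    ∃ ρ, ∀ y, ρ ≤ |y| → y * f y < 0 := by
  obtain ⟨V, H, ψ, ρ, -, -, -, -, -, hψ, -, hdiss, hHψ⟩ := h
  -- The supply inequality holds for every input `u` and is affine in `u`, forcing `V' y = y`.
  have hV (y : ℝ) : deriv V y = y := by
    by_contra hne
    have hα : deriv V y - y ≠ 0 := sub_ne_zero.mpr hne
    have := hdiss y ((-H y - deriv V y * f y + 1) / (deriv V y - y))
    have hcancel := mul_div_cancel₀ (-H y - deriv V y * f y + 1) hα
    nlinarith
  refine ⟨ρ, fun y hy => ?_⟩
  have := hdiss y 0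
  rw [hV] at this
  linarith [hHψ y hy, hψ |y| (abs_nonneg y)]

lemma exists_mul_le_of_continuous {g : ℝ → ℝ} (hg : Continuous g) {ρ : ℝ}
    (hρ : ∀ z, ρ ≤ |z| → z * g z ≤ 0) : ∃ C, ∀ z, z * g z ≤ C := by
  obtain ⟨C, hC⟩ := (isCompact_Icc (a := -ρ) (b := ρ)).bddAbove_image
    (continuous_id.mul hg).continuousOn
  refine ⟨max C 0, fun z => ?_⟩
  rcases le_or_gt ρ |z| with hz | hz
  · exact (hρ z hz).trans (le_max_right _ _)
  · exact (hC ⟨z, abs_le.mp hz.le, rfl⟩).trans (le_max_left _ _)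

section Laplacian

variable {N : ℕ} (a : Fin N → Fin N → ℝ)

lemma lap_eq_diagonal_sub : lap a = diagonal (fun i => ∑ l, a i l) - of a := by
  ext i j
  rw [Matrix.sub_apply, of_apply]
  rcases eq_or_ne i j with rfl | hij
  · rw [diagonal_apply_eq, ← add_sum_erase univ (a i) (mem_univ i)]
    simp only [lap, of_apply, if_true]
    ring
  · simp [lap, hij]

lemma lap_mulVec (y : Fin N → ℝ) (k : Fin N) :
    (lap a *ᵥ y) k = ∑ l, a k l * (y k - y l) := by
  rw [lap_eq_diagonal_sub, sub_mulVec, Pi.sub_apply, mulVec_diagonal]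
  simp [mulVec, dotProduct, mul_sub, sum_mul]

lemma vecMul_lap (π : Fin N → ℝ) (l : Fin N) :
    (π ᵥ* lap a) l = π l * ∑ m, a l m - ∑ k, π k * a k l := by
  rw [lap_eq_diagonal_sub, vecMul_sub, Pi.sub_apply, vecMul_diagonal]
  simp [vecMul, dotProduct]

lemma lap_mulVec_one : lap a *ᵥ 1 = 0 := by
  ext k
  simp [lap_mulVec]

end Laplacian

lemma eq_zero_of_vecMul_lap_eq_zero {N : ℕ} {a : Fin N → Fin N → ℝ} (ha : ∀ i j, 0 ≤ a i j)
    {π : Fin N → ℝ} (hπ : π ᵥ* lap a = 0) {u v : Fin N} (hu : π u ≤ 0) (hv : 0 < π v) :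
    a v u = 0 := by
  classical
  set S := univ.filter fun i => π i ≤ 0
  have hSc : ∀ k ∈ Sᶜ, 0 < π k := fun k hk => by simpa [S] using hk
  have hin : ∀ j ∈ S, ∀ k ∈ Sᶜ, 0 ≤ π k * a k j :=
    fun j _ k hk => mul_nonneg (hSc k hk).le (ha k j)
  -- `π` balances the flow `π k * a k l` at every node, hence across the cut `(S, Sᶜ)`.
  have hcut : ∑ j ∈ S, ∑ l ∈ Sᶜ, π j * a j l = ∑ j ∈ S, ∑ k ∈ Sᶜ, π k * a k j := by
    have h := sum_congr rfl fun j (_ : j ∈ S) =>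
      show ∑ l, π j * a j l = ∑ k, π k * a k j by
        rw [← mul_sum, ← sub_eq_zero, ← vecMul_lap, hπ, Pi.zero_apply]
    simp only [← sum_add_sum_compl S, sum_add_distrib] at h
    rw [sum_comm (s := S) (t := S)] at h
    linarith
  have hout : ∑ j ∈ S, ∑ l ∈ Sᶜ, π j * a j l ≤ 0 :=
    sum_nonpos fun j hj => sum_nonpos fun l _ =>
      mul_nonpos_of_nonpos_of_nonneg (mem_filter.mp hj).2 (ha j l)
  have hinflow : ∑ j ∈ S, ∑ k ∈ Sᶜ, π k * a k j = 0 :=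
    le_antisymm (hcut ▸ hout) (sum_nonneg fun j hj => sum_nonneg (hin j hj))
  have huS : u ∈ S := mem_filter.mpr ⟨mem_univ u, hu⟩
  have hvS : v ∈ Sᶜ := by simpa [S] using hv
  have hzero := (sum_eq_zero_iff_of_nonneg (hin u huS)).mp
    ((sum_eq_zero_iff_of_nonneg fun j hj => sum_nonneg (hin j hj)).mp hinflow u huS) v hvS
  exact (mul_eq_zero.mp hzero).resolve_left hv.ne'

lemma Reachable.mem_of_mem {N : ℕ} {a : Fin N → Fin N → ℝ} {S : Set (Fin N)}
    (hS : ∀ u v, u ∈ S → 0 < a v u → v ∈ S) {i j : Fin N} (h : Reachable a i j) (hi : i ∈ S) :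
    j ∈ S := by
  induction h with
  | refl => exact hi
  | tail _ hbc ih => exact hS _ _ ih hbc

lemma pos_of_vecMul_lap_eq_zero {N : ℕ} {a : Fin N → Fin N → ℝ} (ha : ∀ i j, 0 ≤ a i j)
    (hsc : ∀ i j, Reachable a i j) {π : Fin N → ℝ} (hπ : π ᵥ* lap a = 0) {i₀ : Fin N}
    (hi₀ : 0 < π i₀) (i : Fin N) : 0 < π i := by
  by_contra! hi
  have hclosed (u v : Fin N) (hu : u ∈ {k | π k ≤ 0}) (huv : 0 < a v u) : v ∈ {k | π k ≤ 0} := by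
    by_contra! hv
    exact huv.ne' (eq_zero_of_vecMul_lap_eq_zero ha hπ hu (not_le.mp hv))
  exact (hsc i i₀).mem_of_mem hclosed hi |>.not_gt hi₀

lemma exists_pos_vecMul_lap_eq_zero {N : ℕ} (hN : 0 < N) {a : Fin N → Fin N → ℝ}
    (ha : ∀ i j, 0 ≤ a i j) (hsc : ∀ i j, Reachable a i j) :
    ∃ π : Fin N → ℝ, (∀ i, 0 < π i) ∧ π ᵥ* lap a = 0 := by
  have : NeZero N := ⟨hN.ne'⟩
  have hdet : (lap a).det = 0 :=
    exists_mulVec_eq_zero_iff.mp ⟨1, one_ne_zero, lap_mulVec_one a⟩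
  obtain ⟨π, hπ0, hπ⟩ := exists_vecMul_eq_zero_iff.mpr hdet
  obtain ⟨i₀, hi₀⟩ := Function.ne_iff.mp hπ0
  rcases hi₀.lt_or_gt with hneg | hpos
  · refine ⟨-π, fun i => pos_of_vecMul_lap_eq_zero ha hsc ?_ (neg_pos.mpr hneg) i, ?_⟩ <;>
      simp [neg_vecMul, hπ]
  · exact ⟨π, pos_of_vecMul_lap_eq_zero ha hsc hπ hpos, hπ⟩

def dirichletEnergy {ι : Type*} [Fintype ι] (w : ι → ι → ℝ) (y : ι → ℝ) : ℝ :=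
  ∑ k, ∑ l, w k l * (y k - y l) ^ 2

lemma dirichletEnergy_nonneg {ι : Type*} [Fintype ι] {w : ι → ι → ℝ} (hw : ∀ k l, 0 ≤ w k l)
    (y : ι → ℝ) : 0 ≤ dirichletEnergy w y :=
  sum_nonneg fun k _ => sum_nonneg fun l _ => mul_nonneg (hw k l) (sq_nonneg _)

lemma sum_mul_mul_lap_mulVec {N : ℕ} (a : Fin N → Fin N → ℝ) (π y : Fin N → ℝ) :
    ∑ k, π k * y k * (lap a *ᵥ y) k
      = dirichletEnergy (fun k l => π k * a k l) y / 2 + ∑ l, (π ᵥ* lap a) l * y l ^ 2 / 2 := by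
  have hflux : ∑ l, (π ᵥ* lap a) l * y l ^ 2 = ∑ k, ∑ l, π k * a k l * (y k ^ 2 - y l ^ 2) := by
    simp only [vecMul_lap, sub_mul, sum_sub_distrib, mul_sub, sum_mul, mul_sum]
    rw [sum_comm (f := fun k l => π k * a k l * y l ^ 2)]
  rw [← sum_div, hflux, dirichletEnergy, ← add_div, ← sum_add_distrib, eq_div_iff two_ne_zero,
    sum_mul]
  refine sum_congr rfl fun k _ => ?_
  rw [lap_mulVec, mul_sum, sum_mul, ← sum_add_distrib]
  refine sum_congr rfl fun l _ => by ring

lemma abs_sub_le_sqrt_dirichletEnergy {ι : Type*} [Fintype ι] {w : ι → ι → ℝ}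
    (hw : ∀ k l, 0 ≤ w k l) {u v : ι} (huv : 0 < w v u) (y : ι → ℝ) :
    |y v - y u| ≤ (√(w v u))⁻¹ * √(dirichletEnergy w y) := by
  have hterm : w v u * (y v - y u) ^ 2 ≤ dirichletEnergy w y :=
    (single_le_sum (f := fun l => w v l * (y v - y l) ^ 2)
      (fun l _ => mul_nonneg (hw v l) (sq_nonneg _)) (mem_univ u)).trans
    (single_le_sum (f := fun k => ∑ l, w k l * (y k - y l) ^ 2)
      (fun k _ => sum_nonneg fun l _ => mul_nonneg (hw k l) (sq_nonneg _)) (mem_univ v))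
  rw [← Real.sqrt_sq_eq_abs, inv_mul_eq_div, ← Real.sqrt_div' _ huv.le]
  exact Real.sqrt_le_sqrt ((le_div_iff₀' huv).mpr hterm)

lemma Reachable.exists_abs_sub_le {N : ℕ} {a : Fin N → Fin N → ℝ} (ha : ∀ i j, 0 ≤ a i j)
    {i j : Fin N} (h : Reachable a i j) :
    ∃ K, ∀ y, |y j - y i| ≤ K * √(dirichletEnergy a y) := by
  induction h with
  | refl => exact ⟨0, fun y => by simp⟩
  | @tail b c _ hbc ih =>
    obtain ⟨K, hK⟩ := ih
    refine ⟨K + (√(a c b))⁻¹, fun y => ?_⟩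
    calc |y c - y i| ≤ |y c - y b| + |y b - y i| := abs_sub_le _ _ _
      _ ≤ (√(a c b))⁻¹ * √(dirichletEnergy a y) + K * √(dirichletEnergy a y) :=
          add_le_add (abs_sub_le_sqrt_dirichletEnergy ha hbc y) (hK y)
      _ = _ := by ring

lemma exists_abs_sub_le_mul_sqrt_dirichletEnergy {N : ℕ} {a : Fin N → Fin N → ℝ}
    (ha : ∀ i j, 0 ≤ a i j) (hsc : ∀ i j, Reachable a i j) :
    ∃ K, ∀ y i j, |y j - y i| ≤ K * √(dirichletEnergy a y) := by
  choose K hK using fun i j => (hsc i j).exists_abs_sub_le ha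
  obtain ⟨K', hK'⟩ := Finite.exists_le fun p : Fin N × Fin N => K p.1 p.2
  exact ⟨K', fun y i j =>
    (hK i j y).trans (mul_le_mul_of_nonneg_right (hK' (i, j)) (Real.sqrt_nonneg _))⟩

lemma lyapunov_deriv_le_sub_dirichletEnergy {N : ℕ} {a : Fin N → Fin N → ℝ} {π : Fin N → ℝ}
    (hπ : ∀ k, 0 ≤ π k) (hπL : π ᵥ* lap a = 0) (g : Fin N → ℝ → ℝ) {d s : Fin N → ℝ} {c : ℝ}
    (hs : ∀ k, |s k| ≤ d k * c) (y : Fin N → ℝ) :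
    ∑ k, π k * (2 * y k * (g k (y k) - (lap a *ᵥ y) k - d k * y k + s k))
      ≤ 2 * ∑ k, π k * (y k * g k (y k) + d k * (c * |y k| - y k ^ 2))
        - dirichletEnergy (fun k l => π k * a k l) y := by
  have hquad := sum_mul_mul_lap_mulVec a π y
  simp only [hπL, Pi.zero_apply, zero_mul, zero_div, sum_const_zero, add_zero] at hquad
  have hinput (k : Fin N) : y k * s k ≤ d k * c * |y k| :=
    calc y k * s k ≤ |y k| * |s k| := (le_abs_self _).trans (abs_mul _ _).le
      _ ≤ |y k| * (d k * c) := mul_le_mul_of_nonneg_left (hs k) (abs_nonneg _)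
      _ = d k * c * |y k| := mul_comm _ _
  calc ∑ k, π k * (2 * y k * (g k (y k) - (lap a *ᵥ y) k - d k * y k + s k))
      = 2 * ∑ k, π k * (y k * g k (y k) - d k * y k ^ 2 + y k * s k)
        - 2 * ∑ k, π k * y k * (lap a *ᵥ y) k := by
        rw [mul_sum, mul_sum, ← sum_sub_distrib]
        exact sum_congr rfl fun k _ => by ring
    _ ≤ _ := by
        have hnode : ∑ k, π k * (y k * g k (y k) - d k * y k ^ 2 + y k * s k)
            ≤ ∑ k, π k * (y k * g k (y k) + d k * (c * |y k| - y k ^ 2)) :=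
          sum_le_sum fun k _ => mul_le_mul_of_nonneg_left (by linarith [hinput k]) (hπ k)
        linarith

lemma exists_two_mul_sum_sub_nonpos {ι : Type*} [Fintype ι] {π : ι → ℝ} {φ : ι → ℝ → ℝ}
    {C : ι → ℝ} {R K : ℝ} {E : (ι → ℝ) → ℝ} (hπ : ∀ k, 0 ≤ π k) (hC : ∀ k z, φ k z ≤ C k)
    (hR : ∀ k z, R ≤ |z| → φ k z ≤ 0) (hE : ∀ y, 0 ≤ E y)
    (hK : ∀ y i j, |y j - y i| ≤ K * √(E y)) :
    ∃ R', ∀ y k, R' < |y k| → 2 * ∑ k, π k * φ k (y k) - E y ≤ 0 := by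
  set S := ∑ k, π k * C k
  refine ⟨R + |K| * √(2 * S), fun y k hk => ?_⟩
  by_cases hall : ∀ k, R ≤ |y k|
  · have := sum_nonpos fun k (_ : k ∈ univ) =>
      mul_nonpos_of_nonneg_of_nonpos (hπ k) (hR k (y k) (hall k))
    linarith [hE y]
  -- One coordinate is below `R` and another far above it, so the energy is large.
  obtain ⟨k₁, hk₁⟩ := not_forall.mp hall
  have hS : ∑ k, π k * φ k (y k) ≤ S :=
    sum_le_sum fun k _ => mul_le_mul_of_nonneg_left (hC k (y k)) (hπ k)
  suffices 2 * S ≤ E y by linarith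
  by_contra! hES
  have hspread : |y k - y k₁| ≤ |K| * √(2 * S) :=
    calc |y k - y k₁| ≤ K * √(E y) := hK y k₁ k
      _ ≤ |K| * √(E y) := mul_le_mul_of_nonneg_right (le_abs_self K) (Real.sqrt_nonneg _)
      _ ≤ |K| * √(2 * S) := mul_le_mul_of_nonneg_left (Real.sqrt_le_sqrt hES.le) (abs_nonneg K)
  linarith [abs_sub_abs_le_abs_sub (y k) (y k₁)]

lemma HasDerivWithinAt.sum_mul_sq {ι : Type*} [Fintype ι] {x : ℝ → ι → ℝ} {x' : ι → ℝ}
    {s : Set ℝ} {t : ℝ} (π : ι → ℝ) (hx : ∀ k, HasDerivWithinAt (fun τ => x τ k) (x' k) s t) :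
    HasDerivWithinAt (fun τ => ∑ k, π k * x τ k ^ 2) (∑ k, π k * (2 * x t k * x' k)) s t := by
  refine (HasDerivWithinAt.fun_sum fun k (_ : k ∈ univ) =>
    ((hx k).fun_pow 2).const_mul (π k)).congr_deriv (sum_congr rfl fun k _ => ?_)
  push_cast
  ring

lemma exists_lt_abs_of_sum_mul_sq_lt {ι : Type*} [Fintype ι] {π y : ι → ℝ} {R : ℝ}
    (hπ : ∀ k, 0 ≤ π k) (h : ∑ k, π k * R ^ 2 < ∑ k, π k * y k ^ 2) : ∃ k, R < |y k| := by
  by_contra! hy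
  refine h.not_ge (sum_le_sum fun k _ => mul_le_mul_of_nonneg_left ?_ (hπ k))
  exact sq_le_sq.mpr ((hy k).trans (le_abs_self R))

lemma abs_le_sqrt_div_of_sum_mul_sq_le {ι : Type*} [Fintype ι] {π y : ι → ℝ} {M : ℝ}
    (hπ : ∀ k, 0 < π k) (h : ∑ k, π k * y k ^ 2 ≤ M) (k : ι) : |y k| ≤ √(M / π k) := by
  rw [← Real.sqrt_sq_eq_abs]
  refine Real.sqrt_le_sqrt ((le_div_iff₀' (hπ k)).mpr (h.trans' ?_))
  exact single_le_sum (f := fun k => π k * y k ^ 2)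
    (fun k _ => mul_nonneg (hπ k).le (sq_nonneg _)) (mem_univ k)

lemma le_max_of_deriv_nonpos_of_lt {W W' : ℝ → ℝ} {B : ℝ}
    (hW : ∀ t ∈ Set.Ici (0 : ℝ), HasDerivWithinAt W (W' t) (Set.Ici 0) t)
    (hW' : ∀ t ∈ Set.Ici (0 : ℝ), B < W t → W' t ≤ 0) {t : ℝ} (ht : 0 ≤ t) :
    W t ≤ max (W 0) B := by
  refine le_of_forall_pos_le_add fun ε hε => ?_
  have hδ : 0 < ε / (t + 1) := div_pos hε (by linarith [ht])
  -- The barrier starts strictly above `max (W 0) B`, so `W` can only reach it where `B < W`.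
  have hbarrier := image_le_of_deriv_right_lt_deriv_boundary (a := 0) (b := t) (f := W)
    (B := fun s => max (W 0) B + ε / (t + 1) * (s + 1)) (B' := fun _ => ε / (t + 1))
    (fun s hs => (hW s hs.1).continuousWithinAt.mono Set.Icc_subset_Ici_self)
    (fun s hs => (hW s hs.1).mono (Set.Ici_subset_Ici.mpr hs.1))
    (by nlinarith [le_max_left (W 0) B])
    (fun s => by
      simpa using (((hasDerivAt_id s).add_const 1).const_mul (ε / (t + 1))).const_add (max (W 0) B))
    (fun s hs hWs => (hW' s hs.1 (by nlinarith [le_max_right (W 0) B, hs.1])).trans_lt hδ)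
    ⟨ht, le_rfl⟩
  rwa [div_mul_cancel₀ _ (by linarith [ht])] at hbarrier

lemma abs_sum_mul_le_sum_mul {ι : Type*} (s : Finset ι) {w z : ι → ℝ} {c : ℝ}
    (hw : ∀ i ∈ s, 0 ≤ w i) (hz : ∀ i ∈ s, |z i| ≤ c) :
    |∑ i ∈ s, w i * z i| ≤ (∑ i ∈ s, w i) * c := by
  rw [sum_mul]
  refine (abs_sum_le_sum_abs _ _).trans (sum_le_sum fun i hi => ?_)
  rw [abs_mul, abs_of_nonneg (hw i hi)]
  exact mul_le_mul_of_nonneg_left (hz i hi) (hw i hi)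

theorem damped_network_bounded_of_strongly_connected {N : ℕ} (hN : 0 < N) {f : Fin N → ℝ → ℝ}
    (hf : ∀ k, Continuous (f k)) (hpass : ∀ k, ∃ ρ, ∀ z, ρ ≤ |z| → z * f k z ≤ 0)
    {a : Fin N → Fin N → ℝ} (ha : ∀ i j, 0 ≤ a i j) (hsc : ∀ i j, Reachable a i j)
    {d : Fin N → ℝ} (hd : ∀ k, 0 ≤ d k) {s : ℝ → Fin N → ℝ} {c : ℝ}
    (hs : ∀ t ∈ Set.Ici (0 : ℝ), ∀ k, |s t k| ≤ d k * c) {x : ℝ → Fin N → ℝ}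
    (hx : ∀ k, ∀ t ∈ Set.Ici (0 : ℝ), HasDerivWithinAt (fun τ => x τ k)
      (f k (x t k) - (lap a *ᵥ x t) k - d k * x t k + s t k) (Set.Ici 0) t) :
    ∃ C, ∀ t ∈ Set.Ici (0 : ℝ), ∀ k, |x t k| ≤ C := by
  obtain ⟨π, hπ, hπL⟩ := exists_pos_vecMul_lap_eq_zero hN ha hsc
  have hw (k l : Fin N) : 0 ≤ π k * a k l := mul_nonneg (hπ k).le (ha k l)
  obtain ⟨K, hK⟩ := exists_abs_sub_le_mul_sqrt_dirichletEnergy hw fun i j =>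
    Relation.ReflTransGen.mono (fun u v huv => mul_pos (hπ v) huv) _ _ (hsc i j)
  choose ρ hρ using hpass
  choose C hC using fun k => exists_mul_le_of_continuous (hf k) (hρ k)
  obtain ⟨R, hR⟩ := Finite.exists_le fun k => max (ρ k) c
  have hsupply (k : Fin N) (z : ℝ) :
      z * f k z + d k * (c * |z| - z ^ 2) ≤ C k + d k * c ^ 2 / 4 := by
    nlinarith [hC k z, hd k, sq_nonneg (|z| - c / 2), sq_abs z]
  have hsupply_nonpos (k : Fin N) (z : ℝ) (hz : R ≤ |z|) :
      z * f k z + d k * (c * |z| - z ^ 2) ≤ 0 := by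
    have hcz : c ≤ |z| := (le_max_right _ _).trans ((hR k).trans hz)
    have hdamp : c * |z| - z ^ 2 ≤ 0 := by nlinarith [sq_abs z, abs_nonneg z]
    linarith [hρ k z ((le_max_left _ _).trans ((hR k).trans hz)),
      mul_nonpos_of_nonneg_of_nonpos (hd k) hdamp]
  obtain ⟨R', hR'⟩ := exists_two_mul_sum_sub_nonpos (fun k => (hπ k).le) hsupply hsupply_nonpos
    (dirichletEnergy_nonneg hw) hK
  have hW (t : ℝ) (ht : t ∈ Set.Ici (0 : ℝ)) := HasDerivWithinAt.sum_mul_sq π fun k => hx k t ht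
  have hWbound (t : ℝ) (ht : t ∈ Set.Ici (0 : ℝ)) :=
    le_max_of_deriv_nonpos_of_lt hW (B := ∑ k, π k * R' ^ 2) (fun t ht hWt => by
      obtain ⟨k, hk⟩ := exists_lt_abs_of_sum_mul_sq_lt (fun k => (hπ k).le) hWt
      exact (lyapunov_deriv_le_sub_dirichletEnergy (fun k => (hπ k).le) hπL f (hs t ht) (x t)).trans
        (hR' (x t) k hk)) ht
  obtain ⟨C', hC'⟩ := Finite.exists_le fun k =>
    √(max (∑ k, π k * x 0 k ^ 2) (∑ k, π k * R' ^ 2) / π k)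
  exact ⟨C', fun t ht k => (abs_le_sqrt_div_of_sum_mul_sq_le hπ (hWbound t ht) k).trans (hC' k)⟩

theorem perturbed_network_bounded_of_semipassive_of_strongly_connected_general
    (N : ℕ) (hN : 0 < N)
    (f : Fin N → ℝ → ℝ)
    (hf : ∀ i, Continuous (f i))
    (hsp : ∀ i, SemiPassive (f i))
    (a : Fin N → Fin N → ℝ)
    (ha : ∀ i j, 0 ≤ a i j)
    (hsc : ∀ i j : Fin N, Reachable a i j)
    (p : ℕ)
    (M : Fin p → ℕ)
    (B : ∀ j : Fin p, Matrix (Fin N) (Fin (M j)) ℝ)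
    (hB : ∀ j k ℓ, 0 ≤ B j k ℓ)
    (d : Fin N → ℝ)
    (hd : ∀ k : Fin N, d k = ∑ j : Fin p, ∑ ℓ : Fin (M j), B j k ℓ)
    (v : ∀ j : Fin p, ℝ → Fin (M j) → ℝ)
    (hv : ∀ j : Fin p, ∃ c : ℝ, ∀ t : ℝ, 0 ≤ t → ∀ ℓ, |v j t ℓ| ≤ c)
    (x : ℝ → Fin N → ℝ)
    (hx : ∀ k : Fin N, ∀ t ∈ Set.Ici (0 : ℝ),
      HasDerivWithinAt (fun s => x s k)
        (f k (x t k) - (∑ l : Fin N, lap a k l * x t l) - d k * x t k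
          + ∑ j : Fin p, ∑ ℓ : Fin (M j), B j k ℓ * v j t ℓ)
        (Set.Ici 0) t) :
    ∃ c : ℝ, ∀ t ∈ Set.Ici (0 : ℝ), ∀ k : Fin N, |x t k| ≤ c := by
  choose c₀ hc₀ using hv
  obtain ⟨c, hc⟩ := Finite.exists_le c₀
  have hd₀ (k : Fin N) : 0 ≤ d k := hd k ▸ sum_nonneg fun j _ => sum_nonneg fun ℓ _ => hB j k ℓ
  refine damped_network_bounded_of_strongly_connected hN hf (fun k => ?_) ha hsc hd₀ (c := c)
    (fun t ht k => ?_) hx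
  · obtain ⟨ρ, hρ⟩ := (hsp k).exists_mul_neg
    exact ⟨ρ, fun z hz => (hρ z hz).le⟩
  · rw [hd k, sum_mul]
    refine (abs_sum_le_sum_abs _ _).trans (sum_le_sum fun j _ => ?_)
    exact abs_sum_mul_le_sum_mul _ (fun ℓ _ => hB j k ℓ) fun ℓ _ => (hc₀ j t ht ℓ).trans (hc j)

/-- Boundedness of solutions of a strongly connected network of semi-passive
systems `ẋ̄ = F(x̄) − L x̄ − D x̄ + ∑ⱼ Bⱼ vⱼ(t)`, where the `Bⱼ` have
nonnegative entries, `D = diag(d)` with `dₖ = ∑ⱼ ∑ₗ [Bⱼ]ₖₗ`, and the external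
inputs `vⱼ` are bounded. -/
theorem perturbed_network_bounded_of_semipassive_of_strongly_connected
    (N : ℕ) (hN : 0 < N)
    (f : Fin N → ℝ → ℝ)
    (hf : ∀ i, Continuous (f i))
    (hsp : ∀ i, SemiPassive (f i))
    (a : Fin N → Fin N → ℝ)
    (ha : ∀ i j, 0 ≤ a i j)
    (hsc : ∀ i j : Fin N, Reachable a i j)
    (p : ℕ) (hp : 1 ≤ p)
    (M : Fin p → ℕ)
    (B : ∀ j : Fin p, Matrix (Fin N) (Fin (M j)) ℝ)
    (hB : ∀ j k ℓ, 0 ≤ B j k ℓ)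
    (d : Fin N → ℝ)
    (hd : ∀ k : Fin N, d k = ∑ j : Fin p, ∑ ℓ : Fin (M j), B j k ℓ)
    (v : ∀ j : Fin p, ℝ → Fin (M j) → ℝ)
    (hv : ∀ j : Fin p, ∃ c : ℝ, ∀ t : ℝ, 0 ≤ t → ∀ ℓ, |v j t ℓ| ≤ c)
    (x : ℝ → Fin N → ℝ)
    (hx : ∀ k : Fin N, ∀ t ∈ Set.Ici (0 : ℝ),
      HasDerivWithinAt (fun s => x s k)
        (f k (x t k) - (∑ l : Fin N, lap a k l * x t l) - d k * x t k
          + ∑ j : Fin p, ∑ ℓ : Fin (M j), B j k ℓ * v j t ℓ)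
        (Set.Ici 0) t) :
    ∃ c : ℝ, ∀ t ∈ Set.Ici (0 : ℝ), ∀ k : Fin N, |x t k| ≤ c :=
  perturbed_network_bounded_of_semipassive_of_strongly_connected_general N hN f hf hsp a ha hsc p M
    B hB d hd v hv x hx
end

section
/- Let x : [0,∞) → ℝ^N be a continuous function and let V : ℝ^N → ℝ be a continuous, radially unbounded function (i.e., V(y) → ∞ as ‖y‖ → ∞) such that the composition t ↦ V(x(t)) is differentiable. Suppose there exists R > 0 such that d/dt V(x(t)) ≤ 0 for every t ≥ 0 with ‖x(t)‖ ≥ R. Then the trajectory t ↦ x(t) is bounded on [0,∞). -/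
open Set

/-- If `V` is continuous and radially unbounded, `x` is a continuous trajectory
on `[0,∞)` such that `t ↦ V(x(t))` is differentiable on `[0,∞)`, and the
derivative of `t ↦ V(x(t))` is nonpositive whenever `‖x(t)‖ ≥ R` (for some
`R > 0`), then the trajectory `t ↦ x(t)` is bounded on `[0,∞)`. -/
theorem trajectory_bounded_of_lyapunov_decrease_outside_ball
    (N : ℕ)
    (x : ℝ → EuclideanSpace ℝ (Fin N))
    (hx : ContinuousOn x (Set.Ici 0))
    (V : EuclideanSpace ℝ (Fin N) → ℝ)
    (hV : Continuous V)
    (hVru : Filter.Tendsto V (Filter.comap (fun y => ‖y‖) Filter.atTop) Filter.atTop)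
    (hdiff : ∀ t ∈ Set.Ici (0 : ℝ),
      DifferentiableWithinAt ℝ (fun s => V (x s)) (Set.Ici 0) t)
    (R : ℝ) (hR : 0 < R)
    (hdec : ∀ t ∈ Set.Ici (0 : ℝ), R ≤ ‖x t‖ →
      derivWithin (fun s => V (x s)) (Set.Ici 0) t ≤ 0) :
    ∃ c : ℝ, ∀ t ∈ Set.Ici (0 : ℝ), ‖x t‖ ≤ c := by
  set W : ℝ → ℝ := fun s => V (x s) with hW
  -- max of V on the closed ball of radius R
  obtain ⟨y₀, hy₀, hM⟩ := (isCompact_closedBall (0 : EuclideanSpace ℝ (Fin N)) R).exists_isMaxOn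
    ⟨0, Metric.mem_closedBall_self hR.le⟩ hV.continuousOn
  set M : ℝ := V y₀ with hMdef
  set B : ℝ := max (W 0) M with hB
  -- key claim: W t ≤ B for all t ≥ 0
  have hWB : ∀ t ∈ Set.Ici (0 : ℝ), W t ≤ B := by
    intro t ht
    by_contra hcon
    push_neg at hcon
    have hWcont : ContinuousOn W (Set.Ici (0:ℝ)) := fun s hs =>
      (hdiff s hs).continuousWithinAt
    have ht0 : (0:ℝ) ≤ t := ht
    set S : Set ℝ := Set.Icc 0 t ∩ W ⁻¹' (Set.Iic B) with hS
    have h0S : (0:ℝ) ∈ S := ⟨⟨le_refl _, ht0⟩, show W 0 ≤ B from le_max_left (W 0) M⟩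
    have hSne : S.Nonempty := ⟨0, h0S⟩
    have hSbdd : BddAbove S := ⟨t, fun s hs => hs.1.2⟩
    have hScl : IsClosed S := by
      have : ContinuousOn W (Set.Icc 0 t) := hWcont.mono (fun s hs => hs.1)
      exact this.preimage_isClosed_of_isClosed isClosed_Icc isClosed_Iic
    set s₀ : ℝ := sSup S with hs₀def
    have hs₀S : s₀ ∈ S := hScl.csSup_mem hSne hSbdd
    have hs₀0 : (0:ℝ) ≤ s₀ := hs₀S.1.1
    have hs₀t : s₀ ≤ t := hs₀S.1.2
    have hs₀B : W s₀ ≤ B := hs₀S.2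
    have hs₀lt : s₀ < t := lt_of_le_of_ne hs₀t (fun h => absurd hs₀B (by rw [h]; exact not_le.mpr hcon))
    -- on (s₀, t], W > B
    have hgt : ∀ s, s₀ < s → s ≤ t → B < W s := by
      intro s hs1 hs2
      by_contra hle
      push_neg at hle
      have : s ∈ S := ⟨⟨le_trans hs₀0 hs1.le, hs2⟩, hle⟩
      exact absurd (le_csSup hSbdd this) (not_le.mpr hs1)
    -- deriv W ≤ 0 on Ioo s₀ t, and W differentiable there
    have hdiffAt : ∀ s ∈ Set.Ioo s₀ t, DifferentiableAt ℝ W s := by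
      intro s hs
      have hs0 : (0:ℝ) < s := lt_of_le_of_lt hs₀0 hs.1
      have hnhds : Set.Ici (0:ℝ) ∈ nhds s := Ici_mem_nhds hs0
      exact (hdiff s hs0.le).differentiableAt hnhds
    have hderiv : ∀ s ∈ Set.Ioo s₀ t, deriv W s ≤ 0 := by
      intro s hs
      have hs0 : (0:ℝ) < s := lt_of_le_of_lt hs₀0 hs.1
      have hnhds : Set.Ici (0:ℝ) ∈ nhds s := Ici_mem_nhds hs0
      have hR' : R ≤ ‖x s‖ := by
        by_contra hlt
        push_neg at hlt
        have : V (x s) ≤ M := hM (by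
          simpa [Metric.mem_closedBall, dist_zero_right] using hlt.le)
        have : W s ≤ B := le_trans this (le_max_right _ _)
        exact absurd this (not_le.mpr (hgt s hs.1 hs.2.le))
      have := hdec s hs0.le hR'
      rwa [derivWithin_of_mem_nhds hnhds] at this
    have hanti : AntitoneOn W (Set.Icc s₀ t) := by
      have hint : interior (Set.Icc s₀ t) = Set.Ioo s₀ t := interior_Icc
      refine antitoneOn_of_deriv_nonpos (convex_Icc _ _)
        (hWcont.mono (fun s hs => le_trans hs₀0 hs.1))
        (fun s hs => (hdiffAt s (hint ▸ hs)).differentiableWithinAt)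
        (fun s hs => ?_)
      exact hderiv s (hint ▸ hs)
    have : W t ≤ W s₀ := hanti ⟨le_refl _, hs₀t⟩ ⟨hs₀t, le_refl _⟩ hs₀t
    exact absurd (le_trans this hs₀B) (not_le.mpr hcon)
  -- radial unboundedness: get a radius bound
  have h1 : V ⁻¹' (Set.Ioi B) ∈ Filter.comap (fun y : EuclideanSpace ℝ (Fin N) => ‖y‖)
      Filter.atTop := hVru (Filter.Ioi_mem_atTop B)
  rw [Filter.mem_comap] at h1
  obtain ⟨s, hs, hsub⟩ := h1
  obtain ⟨a, ha⟩ := Filter.mem_atTop_sets.mp hs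
  refine ⟨a, fun t ht => ?_⟩
  by_contra hlt
  push_neg at hlt
  have : B < V (x t) := hsub (ha _ hlt.le)
  exact absurd (hWB t ht) (not_le.mpr this)
end
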